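/- For the Leibniz algebra 𝔏₂ on ℂ³ with sole nonzero basis product e₃e₃ = e₁, the Lie algebra of derivations has dimension 5. -/
import Mathlib


/-- Multiplication of the Leibniz algebra `𝔏₂` on ℂ³ (basis `e₁,e₂,e₃` = indices
`0,1,2`): sole nonzero basis product `e₃e₃ = e₁`. -/
def mulL2 (x y : Fin 3 → ℂ) : Fin 3 → ℂ := ![x 2 * y 2, 0, 0]

/-- The space of derivations of `𝔏₂`, i.e. linear maps `D` with
`D(xy) = D(x)y + xD(y)`, as a submodule of `End(ℂ³)`. -/
noncomputable def DerL2 : Submodule ℂ ((Fin 3 → ℂ) →ₗ[ℂ] (Fin 3 → ℂ)) where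
  carrier := {D | ∀ x y, D (mulL2 x y) = mulL2 (D x) y + mulL2 x (D y)}
  add_mem' := by
    intro D E hD hE x y
    have h1 : mulL2 (D x + E x) y = mulL2 (D x) y + mulL2 (E x) y := by
      funext i; fin_cases i <;> simp [mulL2] <;> ring
    have h2 : mulL2 x (D y + E y) = mulL2 x (D y) + mulL2 x (E y) := by
      funext i; fin_cases i <;> simp [mulL2] <;> ring
    simp only [LinearMap.add_apply, hD x y, hE x y, h1, h2]
    abel
  zero_mem' := by
    intro x y
    funext i; fin_cases i <;> simp [mulL2]
  smul_mem' := by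
    intro c D hD x y
    have h1 : mulL2 (c • D x) y = c • mulL2 (D x) y := by
      funext i; fin_cases i <;> simp [mulL2] <;> ring
    have h2 : mulL2 x (c • D y) = c • mulL2 x (D y) := by
      funext i; fin_cases i <;> simp [mulL2] <;> ring
    simp only [LinearMap.smul_apply, hD x y, h1, h2, smul_add]


/-- Inverse parametrization: 5 parameters to a derivation. -/
noncomputable def psiL2 : (Fin 5 → ℂ) →ₗ[ℂ] ((Fin 3 → ℂ) →ₗ[ℂ] (Fin 3 → ℂ)) where
  toFun c :=
    { toFun := fun x => ![2 * c 4 * x 0 + c 0 * x 1 + c 1 * x 2,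
        c 2 * x 1 + c 3 * x 2, c 4 * x 2]
      map_add' := by intro x y; funext i; fin_cases i <;> simp <;> ring
      map_smul' := by intro a x; funext i; fin_cases i <;> simp [smul_eq_mul] <;> ring }
  map_add' := by intro c d; ext x i; fin_cases i <;> simp <;> ring
  map_smul' := by intro a c; ext x i; fin_cases i <;> simp [smul_eq_mul] <;> ring

lemma psiL2_mem (c : Fin 5 → ℂ) : psiL2 c ∈ DerL2 := by
  intro x y
  funext i
  fin_cases i <;>
    simp [psiL2, mulL2, DerL2, Pi.add_apply] <;> ring

noncomputable def psiL2' : (Fin 5 → ℂ) →ₗ[ℂ] DerL2 :=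
  LinearMap.codRestrict DerL2 psiL2 psiL2_mem

noncomputable def phiL2' : DerL2 →ₗ[ℂ] (Fin 5 → ℂ) where
  toFun D := ![D.1 ![0,1,0] 0, D.1 ![0,0,1] 0, D.1 ![0,1,0] 1,
    D.1 ![0,0,1] 1, D.1 ![0,0,1] 2]
  map_add' := by intro D E; funext i; fin_cases i <;> simp
  map_smul' := by intro a D; funext i; fin_cases i <;> simp

set_option maxHeartbeats 800000 in
noncomputable def equivL2 : DerL2 ≃ₗ[ℂ] (Fin 5 → ℂ) := by
  refine LinearEquiv.ofLinear phiL2' psiL2' ?_ ?_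
  · ext c i
    fin_cases i <;>
      simp [phiL2', psiL2', psiL2, LinearMap.codRestrict]
  · apply LinearMap.ext
    rintro ⟨D, hD⟩
    have h22 := hD ![0,0,1] ![0,0,1]
    have h12 := hD ![0,1,0] ![0,0,1]
    have e1 : D ![1,0,0] = ![2 * D ![0,0,1] 2, 0, 0] := by
      have hm : mulL2 ![0,0,1] ![0,0,1] = ![1,0,0] := by
        funext i; fin_cases i <;> simp [mulL2]
      rw [hm] at h22
      rw [h22]
      funext i; fin_cases i <;> simp [mulL2] <;> ring
    have e2 : D ![0,1,0] 2 = 0 := by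
      have hz : mulL2 ![0,1,0] ![0,0,1] = 0 := by
        funext i; fin_cases i <;> simp [mulL2]
      rw [hz, map_zero] at h12
      have h0 := congrFun h12 0
      simpa [mulL2] using h0.symm
    apply Subtype.ext
    show psiL2 (phiL2' ⟨D, hD⟩) = D
    apply Module.Basis.ext (Pi.basisFun ℂ (Fin 3))
    intro j
    have hb0 : (Pi.basisFun ℂ (Fin 3)) 0 = ![1,0,0] := by
      funext i; fin_cases i <;> simp [Pi.basisFun_apply]
    have hb1 : (Pi.basisFun ℂ (Fin 3)) 1 = ![0,1,0] := by
      funext i; fin_cases i <;> simp [Pi.basisFun_apply]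
    have hb2 : (Pi.basisFun ℂ (Fin 3)) 2 = ![0,0,1] := by
      funext i; fin_cases i <;> simp [Pi.basisFun_apply]
    fin_cases j
    · simp only [Fin.zero_eta, Fin.mk_one, Fin.reduceFinMk]
      rw [hb0, e1]
      funext i
      fin_cases i <;> simp [psiL2, phiL2']
    · simp only [Fin.zero_eta, Fin.mk_one, Fin.reduceFinMk]
      rw [hb1]
      funext i
      fin_cases i
      · simp [psiL2, phiL2']
      · simp [psiL2, phiL2']
      · simp only [psiL2, phiL2', LinearMap.coe_mk, AddHom.coe_mk]
        rw [show (⟨2, by omega⟩ : Fin 3) = 2 from rfl, e2]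
        simp
    · simp only [Fin.zero_eta, Fin.mk_one, Fin.reduceFinMk]
      rw [hb2]
      funext i
      fin_cases i <;> simp [psiL2, phiL2']

/-- The Lie algebra of derivations of `𝔏₂` has dimension 5. -/
theorem stmt_4 : Module.finrank ℂ DerL2 = 5 := by
  rw [equivL2.finrank_eq]
  simp
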